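/- arXiv:1406.0947 — 4 statements merged into one kernel-verified Lean document; each statement's English description precedes it below -/
import Mathlib

section
/- For every integer n ≥ 2, the number s(n) of stacks on [n] satisfies s(n) = 2^{n−1} · a_{n−2}, where (a_k)_{k≥0} are the (large) Schröder numbers, defined by the formal power series identity Σ_{k≥0} a_k x^k = (1 − x − √(1−6x+x²))/(2x). -/
open PowerSeries

namespace Paper

/-- The arc set of a diagram: a finite set of pairs `(i,j)`. -/
abbrev Arcs := Finset (ℕ × ℕ)

/-- A diagram on `[n] = {1,…,n}`: every arc `(i,j)` satisfies `1 ≤ i < j ≤ n`. -/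
def IsDiagram (n : ℕ) (A : Arcs) : Prop :=
  ∀ p ∈ A, 1 ≤ p.1 ∧ p.1 < p.2 ∧ p.2 ≤ n

/-- Two arcs `p = (i₁,j₁)` and `q = (i₂,j₂)` cross if `i₁ < i₂ < j₁ < j₂`. -/
def Crossing (p q : ℕ × ℕ) : Prop :=
  p.1 < q.1 ∧ q.1 < p.2 ∧ p.2 < q.2

/-- A stack on `[n]`: a diagram with no two crossing arcs. -/
def IsStack (n : ℕ) (A : Arcs) : Prop :=
  IsDiagram n A ∧ ∀ p ∈ A, ∀ q ∈ A, ¬ Crossing p q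

/-- Left-degree of vertex `v`: number of arcs `(u,v)` with `u < v`. -/
def ld (A : Arcs) (v : ℕ) : ℕ := (A.filter fun p => p.2 = v).card

/-- Right-degree of vertex `v`: number of arcs `(v,w)` with `v < w`. -/
def rd (A : Arcs) (v : ℕ) : ℕ := (A.filter fun p => p.1 = v).card

/-- Degree of a vertex. -/
def deg (A : Arcs) (v : ℕ) : ℕ := ld A v + rd A v

/-- A zigzag stack: a stack where every vertex has degree ≤ 2 and no vertex has both
positive left-degree and positive right-degree. -/
def IsZigzag (n : ℕ) (A : Arcs) : Prop :=
  IsStack n A ∧ (∀ v, deg A v ≤ 2) ∧ ∀ v, ¬ (1 ≤ ld A v ∧ 1 ≤ rd A v)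

/-- Adjacency in the underlying graph of a diagram. -/
def adj (A : Arcs) (u v : ℕ) : Prop := (u, v) ∈ A ∨ (v, u) ∈ A

/-- `v` lies in the primary component (connected component of vertex 1). -/
def inPrimary (A : Arcs) (v : ℕ) : Prop := Relation.ReflTransGen (adj A) 1 v

/-- The underlying graph on vertex set `[n]` is connected. -/
def ConnectedOn (n : ℕ) (A : Arcs) : Prop :=
  ∀ u v, 1 ≤ u → u ≤ n → 1 ≤ v → v ≤ n → Relation.ReflTransGen (adj A) u v

/-- Number of stacks on `[n]`. -/
noncomputable def stackCount (n : ℕ) : ℕ := Nat.card {A : Arcs // IsStack n A}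

/-- Number of zigzag stacks on `[n]`. -/
noncomputable def zigzagCount (n : ℕ) : ℕ := Nat.card {A : Arcs // IsZigzag n A}

/-- Number of connected zigzag stacks on `[n]`. -/
noncomputable def connZigzagCount (n : ℕ) : ℕ :=
  Nat.card {A : Arcs // IsZigzag n A ∧ ConnectedOn n A}

/-- The ordinary generating function of the numbers of zigzag stacks. -/
noncomputable def Zgf : PowerSeries ℚ := PowerSeries.mk fun n => (zigzagCount n : ℚ)

/-- The power series variable over ℚ. -/
noncomputable def Xq : PowerSeries ℚ := PowerSeries.X

/-- An `m`-reduced zigzag stack on `[n]`: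
(1) `ld(i) + rd(i+m−1) ≤ 2` for `1 ≤ i ≤ n−m+1` (written additively);
(2) if `1 ≤ i < j ≤ n` with `ld(i) > 0` and `rd(j) > 0` then `j − i ≥ m−1`. -/
def MRed (m n : ℕ) (A : Arcs) : Prop :=
  IsZigzag n A ∧
  (∀ i, 1 ≤ i → i + m ≤ n + 1 → ld A i + rd A (i + m - 1) ≤ 2) ∧
  (∀ i j, 1 ≤ i → i < j → j ≤ n → 0 < ld A i → 0 < rd A j → i + m ≤ j + 1)

/-- An `m`-regular linear stack on `[n]`: every arc has length ≥ m and every vertex has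
degree ≤ 2. -/
def RegLinear (m n : ℕ) (A : Arcs) : Prop :=
  IsStack n A ∧ (∀ p ∈ A, p.1 + m ≤ p.2) ∧ ∀ v, deg A v ≤ 2

/-- Number of `m`-reduced zigzag stacks on `[n]`. -/
noncomputable def zm (m n : ℕ) : ℕ := Nat.card {A : Arcs // MRed m n A}

/-- Number of `m`-regular linear stacks on `[n]`. -/
noncomputable def rmc (m n : ℕ) : ℕ := Nat.card {A : Arcs // RegLinear m n A}

/-- Generating function of `m`-reduced zigzag stacks. -/
noncomputable def Zm (m : ℕ) : PowerSeries ℚ := PowerSeries.mk fun n => (zm m n : ℚ)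

/-- Generating function of `m`-regular linear stacks. -/
noncomputable def Rm (m : ℕ) : PowerSeries ℚ := PowerSeries.mk fun n => (rmc m n : ℚ)

/-- Extended left-degree function used to define boundary types. -/
def extLD (A : Arcs) (l a v : ℕ) : ℕ :=
  if v = 0 then a else if v = l + 1 then 0 else ld A v

/-- Extended right-degree function used to define boundary types. -/
def extRD (A : Arcs) (l b v : ℕ) : ℕ :=
  if v = 0 then 0 else if v = l + 1 then b else rd A v

/-- An `m`-reduced zigzag stack on `[l]` of boundary type `(a,b)`. -/
def BoundaryType (m a b l : ℕ) (A : Arcs) : Prop :=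
  MRed m l A ∧
  (∀ i, i + m ≤ l + 2 → extLD A l a i + extRD A l b (i + m - 1) ≤ 2) ∧
  (∀ i j, i < j → j ≤ l + 1 → 0 < extLD A l a i → 0 < extRD A l b j → i + m ≤ j + 1)

/-- Number of boundary-type-`(a,b)` structures on `[n]`. -/
noncomputable def tc (m a b n : ℕ) : ℕ := Nat.card {A : Arcs // BoundaryType m a b n A}

/-- Generating functions `T_i(x)`; types T₁,…,T₆ correspond to `(a,b)` =
(0,0), (1,0), (1,1), (2,0), (2,1), (2,2). -/
noncomputable def Tgf (m a b : ℕ) : PowerSeries ℚ := PowerSeries.mk fun n => (tc m a b n : ℚ)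

/-- Type G : `m`-reduced zigzag stack with `deg(1) ≤ 1`. -/
def TypeG (m n : ℕ) (A : Arcs) : Prop := MRed m n A ∧ deg A 1 ≤ 1

/-- Type H : `m`-reduced zigzag stack with `deg(1) ≤ 1` and `deg(n) ≤ 1`. -/
def TypeH (m n : ℕ) (A : Arcs) : Prop := MRed m n A ∧ deg A 1 ≤ 1 ∧ deg A n ≤ 1

noncomputable def gcnt (m n : ℕ) : ℕ := Nat.card {A : Arcs // TypeG m n A}
noncomputable def hcnt (m n : ℕ) : ℕ := Nat.card {A : Arcs // TypeH m n A}

/-- Generating function `G(x)`. -/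
noncomputable def Ggf (m : ℕ) : PowerSeries ℚ := PowerSeries.mk fun n => (gcnt m n : ℚ)

/-- Generating function `H(x)`. -/
noncomputable def Hgf (m : ℕ) : PowerSeries ℚ := PowerSeries.mk fun n => (hcnt m n : ℚ)

/-- The reduction map θ_m: replace each arc `(i,j)` by `(i, j−m+1)`. -/
def theta (m : ℕ) (A : Arcs) : Arcs := A.image fun p => (p.1, p.2 - m + 1)

/-- Relabel a structure whose arcs lie in `{c+1, …}` down by `c`. -/
def shiftDown (c : ℕ) (A : Arcs) : Arcs := A.image fun p => (p.1 - c, p.2 - c)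

/-- Conditions (1) and (2) of `m`-reducedness restricted to a set `J` of vertices. -/
def CondOn (m : ℕ) (A : Arcs) (J : Finset ℕ) : Prop :=
  (∀ i, i ∈ J → i + m - 1 ∈ J → ld A i + rd A (i + m - 1) ≤ 2) ∧
  (∀ i j, i ∈ J → j ∈ J → i < j → 0 < ld A i → 0 < rd A j → i + m ≤ j + 1)

/-!
Unit arcs `(i, i + 1)` cross nothing, so a stack on `[n]` is a free choice among the `n - 1`
unit arcs together with a stack without unit arcs. A stack without unit arcs on an interval
splits at the longest arc `(lo, j)` from its first vertex into the part under that arc and a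
stack on `[j, hi]`; the arc `(lo, j)` itself crosses nothing under it and may be toggled, which
accounts for a factor `2`. The resulting quadratic recurrence is the Schröder recurrence
`a (m + 1) = a m + ∑ a k * a (m - k)`, which is also read off from `A = 1 + x A + x A²`, the
defining identity of the Schröder series with the square root cleared.
-/

open Finset

def Noncrossing (A : Arcs) : Prop := ∀ p ∈ A, ∀ q ∈ A, ¬ Crossing p q

instance : DecidableRel Crossing := fun p q => by unfold Crossing; infer_instance

instance : DecidablePred Noncrossing := fun A => by unfold Noncrossing; infer_instance

lemma Noncrossing.mono {A B : Arcs} (hA : Noncrossing A) (hBA : B ⊆ A) : Noncrossing B :=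
  fun p hp q hq => hA p (hBA hp) q (hBA hq)

lemma Noncrossing.union {A B : Arcs} (hA : Noncrossing A) (hB : Noncrossing B)
    (hAB : ∀ p ∈ A, ∀ q ∈ B, ¬ Crossing p q ∧ ¬ Crossing q p) : Noncrossing (A ∪ B) := by
  intro p hp q hq
  rcases mem_union.1 hp with hp | hp <;> rcases mem_union.1 hq with hq | hq
  exacts [hA p hp q hq, (hAB p hp q hq).1, (hAB q hq p hp).2, hB p hp q hq]

lemma not_crossing_of_unit {p q : ℕ × ℕ} (hp : p.2 = p.1 + 1) :
    ¬ Crossing p q ∧ ¬ Crossing q p := by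
  unfold Crossing; omega

def longStacks (lo hi : ℕ) : Finset Arcs :=
  {A ∈ {p ∈ Icc lo hi ×ˢ Icc lo hi | p.1 + 2 ≤ p.2}.powerset | Noncrossing A}

lemma mem_longStacks {lo hi : ℕ} {A : Arcs} :
    A ∈ longStacks lo hi ↔ (∀ p ∈ A, lo ≤ p.1 ∧ p.1 + 2 ≤ p.2 ∧ p.2 ≤ hi) ∧ Noncrossing A := by
  simp only [longStacks, mem_filter, mem_powerset, subset_iff, mem_product, mem_Icc]
  refine and_congr_left' (forall₂_congr fun p _ => ?_)
  omega

lemma longStacks_of_lt {lo hi : ℕ} (h : hi < lo + 2) : longStacks lo hi = {∅} := by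
  ext A
  simp only [mem_longStacks, mem_singleton, eq_empty_iff_forall_notMem]
  constructor
  · rintro ⟨hA, -⟩ p hp
    have := hA p hp
    omega
  · rintro hA
    exact ⟨fun p hp => absurd hp (hA p), fun p hp => absurd hp (hA p)⟩

def unitArcs (n : ℕ) : Finset (ℕ × ℕ) :=
  (Ico 1 n).map ⟨fun i => (i, i + 1), fun _ _ h => (Prod.mk.inj h).1⟩

lemma mem_unitArcs {n : ℕ} {p : ℕ × ℕ} :
    p ∈ unitArcs n ↔ 1 ≤ p.1 ∧ p.2 = p.1 + 1 ∧ p.2 ≤ n := by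
  obtain ⟨i, j⟩ := p
  simp only [unitArcs, mem_map, mem_Ico]
  constructor
  · rintro ⟨k, hk, ⟨⟩⟩
    omega
  · rintro ⟨h1, rfl, h2⟩
    exact ⟨i, ⟨h1, by omega⟩, rfl⟩

lemma card_unitArcs (n : ℕ) : #(unitArcs n) = n - 1 := by
  simp [unitArcs]

lemma isStack_iff_unit_split {n : ℕ} {A : Arcs} :
    IsStack n A ↔ {p ∈ A | p.2 = p.1 + 1} ⊆ unitArcs n ∧
      {p ∈ A | p.2 ≠ p.1 + 1} ∈ longStacks 1 n := by
  simp only [IsStack, IsDiagram, subset_iff, mem_filter, mem_unitArcs, mem_longStacks]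
  constructor
  · rintro ⟨hA, hnc⟩
    refine ⟨fun p ⟨hp, hu⟩ => ?_, fun p ⟨hp, hu⟩ => ?_,
      Noncrossing.mono hnc (filter_subset _ _)⟩ <;> have := hA p hp <;> omega
  · rintro ⟨hU, hL, hnc⟩
    refine ⟨fun p hp => ?_, ?_⟩
    · by_cases hu : p.2 = p.1 + 1
      · have := hU ⟨hp, hu⟩; omega
      · have := hL p ⟨hp, hu⟩; omega
    · rw [← filter_union_filter_not_eq (fun p : ℕ × ℕ => p.2 = p.1 + 1) A]
      exact Noncrossing.union (fun p hp q _ => (not_crossing_of_unit (mem_filter.1 hp).2).1) hnc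
        fun p hp q _ => not_crossing_of_unit (mem_filter.1 hp).2

lemma filter_union_of_unit_of_long {n lo hi : ℕ} {U L : Arcs} (hU : U ⊆ unitArcs n)
    (hL : L ∈ longStacks lo hi) :
    {p ∈ U ∪ L | p.2 = p.1 + 1} = U ∧ {p ∈ U ∪ L | p.2 ≠ p.1 + 1} = L := by
  have hu : ∀ p ∈ U, p.2 = p.1 + 1 := fun p hp => (mem_unitArcs.1 (hU hp)).2.1
  have hl : ∀ p ∈ L, p.2 ≠ p.1 + 1 := fun p hp => by
    have := (mem_longStacks.1 hL).1 p hp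
    omega
  rw [filter_union, filter_union, filter_true_of_mem hu, filter_false_of_mem hl,
    filter_false_of_mem fun p hp => not_not.2 (hu p hp), filter_true_of_mem hl]
  exact ⟨union_empty U, empty_union L⟩

/-- Unit arcs cross nothing, so they can be added to or removed from a stack freely. -/
def stackEquiv (n : ℕ) :
    {A : Arcs // IsStack n A} ≃
      ((unitArcs n).powerset ×ˢ longStacks 1 n : Finset (Arcs × Arcs)) where
  toFun A := ⟨({p ∈ A.1 | p.2 = p.1 + 1}, {p ∈ A.1 | p.2 ≠ p.1 + 1}),
    mem_product.2 (by rw [mem_powerset]; exact isStack_iff_unit_split.1 A.2)⟩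
  invFun P := ⟨P.1.1 ∪ P.1.2, by
    obtain ⟨hU, hL⟩ := mem_product.1 P.2
    rw [isStack_iff_unit_split, (filter_union_of_unit_of_long (mem_powerset.1 hU) hL).1,
      (filter_union_of_unit_of_long (mem_powerset.1 hU) hL).2]
    exact ⟨mem_powerset.1 hU, hL⟩⟩
  left_inv A := Subtype.ext (filter_union_filter_not_eq _ A.1)
  right_inv P := by
    obtain ⟨hU, hL⟩ := mem_product.1 P.2
    have h := filter_union_of_unit_of_long (mem_powerset.1 hU) hL
    exact Subtype.ext (Prod.ext h.1 h.2)

theorem stackCount_eq_two_pow_mul (n : ℕ) : stackCount n = 2 ^ (n - 1) * #(longStacks 1 n) := by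
  rw [stackCount, Nat.card_congr (stackEquiv n), Nat.card_eq_finsetCard, card_product,
    card_powerset, card_unitArcs]

lemma card_eq_two_mul_card_filter_mem {α : Type*} [DecidableEq α] {𝒜 : Finset (Finset α)}
    {a : α} (h𝒜 : ∀ s, a ∉ s → (insert a s ∈ 𝒜 ↔ s ∈ 𝒜)) :
    #𝒜 = 2 * #{s ∈ 𝒜 | a ∈ s} := by
  have hsub : 𝒜.memberSubfamily a = 𝒜.nonMemberSubfamily a := by
    ext s
    simp only [mem_memberSubfamily, mem_nonMemberSubfamily]
    exact ⟨fun h => ⟨(h𝒜 s h.2).1 h.1, h.2⟩, fun h => ⟨(h𝒜 s h.2).2 h.1, h.2⟩⟩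
  rw [← card_memberSubfamily_add_card_nonMemberSubfamily a 𝒜, ← hsub, memberSubfamily,
    card_image_of_injOn, two_mul]
  exact (erase_injOn' a).mono fun s hs => (mem_filter.1 hs).2

lemma insert_mem_longStacks_iff {lo hi : ℕ} (h : lo + 2 ≤ hi) {A : Arcs} :
    insert (lo, hi) A ∈ longStacks lo hi ↔ A ∈ longStacks lo hi := by
  simp only [mem_longStacks, forall_mem_insert]
  constructor
  · rintro ⟨⟨-, hA⟩, hnc⟩
    exact ⟨hA, Noncrossing.mono hnc (subset_insert _ _)⟩
  · rintro ⟨hA, hnc⟩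
    refine ⟨⟨⟨le_rfl, h, le_rfl⟩, hA⟩, ?_⟩
    rw [insert_eq]
    refine Noncrossing.union (fun p hp q hq => ?_) hnc fun p hp q hq => ?_ <;>
      simp only [mem_singleton] at hp hq <;> subst_vars <;> unfold Crossing
    · omega
    · have := hA q hq
      omega

/-- The full arc `(lo, hi)` crosses no arc of `[lo, hi]`, so it can be toggled freely. -/
lemma card_longStacks_eq_two_mul {lo hi : ℕ} (h : lo + 2 ≤ hi) :
    #(longStacks lo hi) = 2 * #{A ∈ longStacks lo hi | (lo, hi) ∈ A} :=
  card_eq_two_mul_card_filter_mem fun _ _ => insert_mem_longStacks_iff h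

lemma noncrossing_image_iff {f : ℕ → ℕ} (hf : StrictMono f) {A : Arcs} :
    Noncrossing (A.image (Prod.map f f)) ↔ Noncrossing A := by
  simp only [Noncrossing, forall_mem_image, Crossing, Prod.map_fst, Prod.map_snd, hf.lt_iff_lt]

lemma longStacks_add (lo hi c : ℕ) :
    longStacks (lo + c) (hi + c) =
      (longStacks lo hi).image (image (Prod.map (· + c) (· + c))) := by
  have hmono : StrictMono (· + c) := strictMono_id.add_const c
  ext A
  simp only [mem_image, mem_longStacks]
  constructor
  · rintro ⟨hA, hnc⟩
    have hback : (A.image (Prod.map (· - c) (· - c))).image (Prod.map (· + c) (· + c)) = A := by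
      rw [image_image]
      refine (image_congr fun p hp => ?_).trans (image_id (s := A))
      have := hA p hp
      simp only [Function.comp_apply, Prod.map_fst, Prod.map_snd, id_eq, Prod.ext_iff]
      omega
    refine ⟨_, ⟨?_, ?_⟩, hback⟩
    · simp only [forall_mem_image, Prod.map_fst, Prod.map_snd]
      intro p hp
      have := hA p hp
      omega
    · rwa [← noncrossing_image_iff hmono, hback]
  · rintro ⟨B, ⟨hB, hnc⟩, rfl⟩
    refine ⟨?_, (noncrossing_image_iff hmono).2 hnc⟩
    simp only [forall_mem_image, Prod.map_fst, Prod.map_snd]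
    intro p hp
    have := hB p hp
    omega

lemma card_longStacks_shift {lo hi : ℕ} (h : lo ≤ hi) :
    #(longStacks lo hi) = #(longStacks 0 (hi - lo)) := by
  have hinj : Function.Injective (Prod.map (· + lo) (· + lo)) :=
    (add_left_injective lo).prodMap (add_left_injective lo)
  conv_lhs => rw [← zero_add lo, ← Nat.sub_add_cancel h, longStacks_add]
  exact card_image_of_injective _ (image_injective hinj)

def maxEndFrom (v : ℕ) (A : Arcs) : ℕ := {p ∈ A | p.1 = v}.sup Prod.snd

lemma maxEndFrom_eq_zero_iff {v : ℕ} {A : Arcs} :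
    maxEndFrom v A = 0 ↔ ∀ p ∈ A, p.1 = v → p.2 = 0 := by
  simp [maxEndFrom]

lemma maxEndFrom_eq_iff {v j : ℕ} {A : Arcs} (hj : j ≠ 0) :
    maxEndFrom v A = j ↔ (v, j) ∈ A ∧ ∀ p ∈ A, p.1 = v → p.2 ≤ j := by
  constructor
  · rintro rfl
    have hne : {p ∈ A | p.1 = v}.Nonempty := by
      by_contra h
      rw [not_nonempty_iff_eq_empty] at h
      simp [maxEndFrom, h] at hj
    obtain ⟨p, hp, hmax⟩ := exists_mem_eq_sup _ hne Prod.snd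
    obtain ⟨hpA, rfl⟩ := mem_filter.1 hp
    exact ⟨by rwa [maxEndFrom, hmax], fun q hq hqv =>
      le_sup (f := Prod.snd) (mem_filter.2 ⟨hq, hqv⟩)⟩
  · rintro ⟨hvj, hmax⟩
    exact le_antisymm (Finset.sup_le fun p hp => hmax p (mem_filter.1 hp).1 (mem_filter.1 hp).2)
      (le_sup (f := Prod.snd) (mem_filter.2 ⟨hvj, rfl⟩ : (v, j) ∈ {p ∈ A | p.1 = v}))

lemma filter_maxEndFrom_eq_zero (lo hi : ℕ) :
    {A ∈ longStacks lo hi | maxEndFrom lo A = 0} = longStacks (lo + 1) hi := by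
  ext A
  simp only [mem_filter, mem_longStacks, maxEndFrom_eq_zero_iff]
  constructor
  · rintro ⟨⟨hA, hnc⟩, h0⟩
    refine ⟨fun p hp => ?_, hnc⟩
    have := hA p hp
    have := h0 p hp
    omega
  · rintro ⟨hA, hnc⟩
    refine ⟨⟨fun p hp => ?_, hnc⟩, fun p hp => ?_⟩ <;>
      have := hA p hp <;> omega

lemma le_or_le_of_noncrossing {v j : ℕ} {A : Arcs} (hA : Noncrossing A) (hvj : (v, j) ∈ A)
    (hmax : ∀ p ∈ A, p.1 = v → p.2 ≤ j) {p : ℕ × ℕ} (hp : p ∈ A) (hvp : v ≤ p.1) :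
    p.2 ≤ j ∨ j ≤ p.1 := by
  by_contra h
  rcases hvp.eq_or_lt with hv | hv
  · have := hmax p hp hv.symm
    omega
  · exact hA _ hvj _ hp ⟨hv, by omega, by omega⟩

lemma card_filter_maxEndFrom_eq {lo j hi : ℕ} (hj : lo + 2 ≤ j) (hjhi : j ≤ hi) :
    #{A ∈ longStacks lo hi | maxEndFrom lo A = j} =
      #{B ∈ longStacks lo j | (lo, j) ∈ B} * #(longStacks j hi) := by
  rw [← card_product]
  refine card_nbij' (fun A => ({p ∈ A | p.2 ≤ j}, {p ∈ A | j ≤ p.1})) (fun P => P.1 ∪ P.2)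
    (fun A hA => ?_) (fun P hP => ?_) (fun A hA => ?_) (fun P hP => ?_)
  · rw [mem_coe, mem_filter, mem_longStacks, maxEndFrom_eq_iff (by omega)] at hA
    obtain ⟨⟨hA, hnc⟩, hvj, -⟩ := hA
    simp only [mem_coe, mem_product, mem_filter, mem_longStacks]
    refine ⟨⟨⟨fun p hp => ?_, Noncrossing.mono hnc (filter_subset _ _)⟩, hvj, le_rfl⟩,
      fun p hp => ?_, Noncrossing.mono hnc (filter_subset _ _)⟩ <;>
      obtain ⟨hp, h⟩ := hp <;> have := hA p hp <;> omega
  · obtain ⟨B, C⟩ := P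
    simp only [mem_coe, mem_product, mem_filter, mem_longStacks] at hP
    obtain ⟨⟨⟨hB, hBnc⟩, hvj⟩, hC, hCnc⟩ := hP
    rw [mem_coe, mem_filter, mem_longStacks, maxEndFrom_eq_iff (by omega)]
    refine ⟨⟨fun p hp => ?_, hBnc.union hCnc fun p hp q hq => ?_⟩, mem_union_left _ hvj,
      fun p hp hpv => ?_⟩
    · rcases mem_union.1 hp with hp | hp
      · have := hB p hp; omega
      · have := hC p hp; omega
    · have := hB p hp; have := hC q hq; unfold Crossing; omega
    · rcases mem_union.1 hp with hp | hp
      · exact (hB p hp).2.2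
      · have := hC p hp; omega
  · rw [mem_coe, mem_filter, mem_longStacks, maxEndFrom_eq_iff (by omega)] at hA
    obtain ⟨⟨hA, hnc⟩, hvj, hmax⟩ := hA
    dsimp only
    rw [← filter_or, filter_true_of_mem fun p hp =>
      le_or_le_of_noncrossing hnc hvj hmax hp (hA p hp).1]
  · obtain ⟨B, C⟩ := P
    simp only [mem_coe, mem_product, mem_filter, mem_longStacks] at hP
    obtain ⟨⟨⟨hB, -⟩, -⟩, hC, -⟩ := hP
    dsimp only
    rw [filter_union, filter_union, filter_true_of_mem fun p hp => (hB p hp).2.2,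
      filter_false_of_mem fun p hp => by have := hC p hp; omega,
      filter_false_of_mem fun p hp => by have := hB p hp; omega,
      filter_true_of_mem fun p hp => (hC p hp).1, union_empty, empty_union]

theorem card_longStacks_eq_sum (lo hi : ℕ) :
    #(longStacks lo hi) = #(longStacks (lo + 1) hi) +
      ∑ j ∈ Icc (lo + 2) hi, #{B ∈ longStacks lo j | (lo, j) ∈ B} * #(longStacks j hi) := by
  have hmaps : ∀ A ∈ longStacks lo hi, maxEndFrom lo A ∈ insert 0 (Icc (lo + 2) hi) := by
    intro A hA
    by_cases h0 : maxEndFrom lo A = 0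
    · exact h0 ▸ mem_insert_self _ _
    have hvj := ((maxEndFrom_eq_iff h0).1 rfl).1
    have := (mem_longStacks.1 hA).1 _ hvj
    exact mem_insert_of_mem (mem_Icc.2 this.2)
  rw [card_eq_sum_card_fiberwise hmaps, sum_insert (by simp), filter_maxEndFrom_eq_zero]
  exact congrArg _ (sum_congr rfl fun j hj =>
    card_filter_maxEndFrom_eq (mem_Icc.1 hj).1 (mem_Icc.1 hj).2)

lemma card_longStacks_zero_add_two (m : ℕ) :
    #(longStacks 0 (m + 2)) = #(longStacks 0 (m + 1)) +
      ∑ k ∈ range (m + 1),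
        #{B ∈ longStacks 0 (k + 2) | (0, k + 2) ∈ B} * #(longStacks 0 (m - k)) := by
  rw [card_longStacks_eq_sum, zero_add, zero_add, card_longStacks_shift (by omega),
    ← Ico_add_one_right_eq_Icc, sum_Ico_eq_sum_range]
  refine congrArg _ (sum_congr rfl fun k hk => ?_)
  rw [card_longStacks_shift (by rw [mem_range] at hk; omega), add_comm 2 k]
  congr 3
  omega

def IsSchroeder {R : Type*} [Semiring R] (a : ℕ → R) : Prop :=
  a 0 = 1 ∧ ∀ m, a (m + 1) = a m + ∑ p ∈ antidiagonal m, a p.1 * a p.2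

lemma IsSchroeder.map {R S : Type*} [Semiring R] [Semiring S] (f : R →+* S) {a : ℕ → R}
    (ha : IsSchroeder a) : IsSchroeder (f ∘ a) :=
  ⟨by simp [ha.1], fun m => by simp [ha.2 m, map_sum]⟩

lemma IsSchroeder.unique {R : Type*} [Semiring R] {a b : ℕ → R} (ha : IsSchroeder a)
    (hb : IsSchroeder b) : a = b := by
  funext m
  induction m using Nat.strong_induction_on with
  | _ m ih =>
    cases m with
    | zero => rw [ha.1, hb.1]
    | succ m =>
      rw [ha.2, hb.2, ih m m.lt_succ_self]
      refine congrArg _ (sum_congr rfl fun p hp => ?_)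
      have := mem_antidiagonal.1 hp
      rw [ih p.1 (by omega), ih p.2 (by omega)]

lemma isSchroeder_of_sq {K : Type*} [Field K] [CharZero K] {a : ℕ → K}
    (ha : (1 - X - 2 * X * PowerSeries.mk a) ^ 2 = 1 - 6 * X + X ^ 2) : IsSchroeder a := by
  set A := PowerSeries.mk a
  have hA : A = 1 + X * A + X * A ^ 2 := by
    have h4X : (4 : K⟦X⟧) * X ≠ 0 :=
      mul_ne_zero (fun h => by simpa [map_ofNat] using congrArg constantCoeff h) X_ne_zero
    have := (mul_eq_zero.1 (by linear_combination ha :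
      (4 : K⟦X⟧) * X * (1 + X * A + X * A ^ 2 - A) = 0)).resolve_left h4X
    linear_combination -this
  refine ⟨by simpa [A] using congrArg constantCoeff hA, fun m => ?_⟩
  have := congrArg (coeff (m + 1)) hA
  rw [map_add, map_add, coeff_succ_X_mul, coeff_succ_X_mul, coeff_one, if_neg m.succ_ne_zero,
    zero_add, pow_two, coeff_mul] at this
  simpa only [A, coeff_mk] using this

theorem isSchroeder_card_longStacks : IsSchroeder fun m => #(longStacks 0 (m + 1)) := by
  refine ⟨show #(longStacks 0 1) = 1 by rw [longStacks_of_lt (by omega), card_singleton],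
    fun m => ?_⟩
  set g := fun d => #(longStacks 0 d)
  set h := fun j => #{B ∈ longStacks 0 j | (0, j) ∈ B}
  have hg0 : g 0 = 1 := by simp only [g, longStacks_of_lt (by omega : 0 < 0 + 2), card_singleton]
  have hg1 : g 1 = 1 := by simp only [g, longStacks_of_lt (by omega : 1 < 0 + 2), card_singleton]
  have hgh : ∀ k, g (k + 2) = 2 * h (k + 2) := fun k => card_longStacks_eq_two_mul (by omega)
  have hrec : g (m + 2) = g (m + 1) + ∑ k ∈ range (m + 1), h (k + 2) * g (m - k) :=
    card_longStacks_zero_add_two m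
  show g (m + 2) = g (m + 1) + ∑ p ∈ antidiagonal m, g (p.1 + 1) * g (p.2 + 1)
  rw [Nat.sum_antidiagonal_eq_sum_range_succ (fun k l => g (k + 1) * g (l + 1)), sum_range_succ',
    Nat.sub_zero, hg1, one_mul]
  -- the last term of `hrec` has the whole interval under the full arc: it is half of `g (m + 2)`
  rw [sum_range_succ, Nat.sub_self, hg0, mul_one] at hrec
  have hsum : ∑ k ∈ range m, g (k + 1 + 1) * g (m - (k + 1) + 1) =
      2 * ∑ k ∈ range m, h (k + 2) * g (m - k) := by
    rw [mul_sum]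
    refine sum_congr rfl fun k hk => ?_
    rw [hgh, show m - (k + 1) + 1 = m - k by rw [mem_range] at hk; omega, mul_assoc]
  have := hgh m
  omega

/-- `s(n) = 2^{n−1}·a_{n−2}` for `n ≥ 2`, where the Schröder numbers `a`
are characterized by `(Σ a_k x^k)·2x = 1 − x − √(1−6x+x²)`, i.e. by the formal identity
`(1 − x − 2x·A(x))² = 1 − 6x + x²` (the square root with constant term 1 being unique). -/
theorem stack_count_schroeder (a : ℕ → ℚ)
    (ha : (1 - Xq - 2 * Xq * PowerSeries.mk a) ^ 2 = 1 - 6 * Xq + Xq ^ 2) :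
    ∀ n : ℕ, 2 ≤ n → (stackCount n : ℚ) = 2 ^ (n - 1) * a (n - 2) := by
  have hcount : a = _ :=
    (isSchroeder_of_sq ha).unique (isSchroeder_card_longStacks.map (Nat.castRingHom ℚ))
  intro n hn
  obtain ⟨m, rfl⟩ : ∃ m, n = m + 2 := ⟨n - 2, by omega⟩
  rw [stackCount_eq_two_pow_mul, card_longStacks_shift (by omega), hcount]
  simp

end Paper
end

section
/- Let S be a zigzag stack on [n] and let C be its primary component. Then no arc of S connects two vertices lying in two different C-intervals; consequently every arc of S is either an arc of C or has both endpoints in the same C-interval, so S decomposes into its primary component together with a list of zigzag stacks, one on each C-interval. -/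
open PowerSeries

namespace Paper

/-! An arc `(i, j)` of a stack fences off the open interval between its endpoints: an arc
leaving that interval would cross `(i, j)`. So a walk from vertex `1` into the interval must pass
through `i` or `j`, and since `i` and `j` are adjacent, `i` then lies in the primary component. -/

section Stack

variable {n : ℕ} {A : Arcs} {i j : ℕ}

theorem IsStack.not_adj_of_mem_Ioo (hA : IsStack n A) (hij : (i, j) ∈ A) {b c : ℕ}
    (hb : b < i ∨ j < b) (hc : i < c ∧ c < j) : ¬ adj A b c := by
  obtain ⟨hdiag, hcross⟩ := hA
  rintro (hbc | hcb)
  · rcases hb with hb | hb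
    · exact hcross _ hbc _ hij ⟨hb, hc.1, hc.2⟩
    · have := (hdiag _ hbc).2.1
      omega
  · rcases hb with hb | hb
    · have := (hdiag _ hcb).2.1
      omega
    · exact hcross _ hij _ hcb ⟨hc.1, hc.2, hb⟩

theorem IsStack.reflTransGen_left_of_mem_Ioo (hA : IsStack n A) (hij : (i, j) ∈ A) {u v : ℕ}
    (hu : ¬ (i < u ∧ u < j)) (huv : Relation.ReflTransGen (adj A) u v) (hv : i < v ∧ v < j) :
    Relation.ReflTransGen (adj A) u i := by
  induction huv with
  | refl => exact absurd hv hu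
  | @tail b c hub hbc ih =>
    by_cases hb : i < b ∧ b < j
    · exact ih hb
    rcases lt_trichotomy b i with hbi | rfl | hib
    · exact absurd hbc (hA.not_adj_of_mem_Ioo hij (Or.inl hbi) hv)
    · exact hub
    rcases lt_trichotomy b j with hbj | rfl | hjb
    · exact absurd ⟨hib, hbj⟩ hb
    · exact hub.tail (Or.inr hij)
    · exact absurd hbc (hA.not_adj_of_mem_Ioo hij (Or.inr hjb) hv)

end Stack

/-- no arc of a zigzag stack connects two vertices in different C-intervals:
every arc either has both endpoints in the primary component, or has both endpoints outside
it with no vertex of the primary component strictly in between (i.e. both endpoints lie in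
the same C-interval). -/
theorem primary_component_decomposition (n : ℕ) (A : Arcs) (hA : IsZigzag n A) :
    ∀ p ∈ A,
      (inPrimary A p.1 ∧ inPrimary A p.2) ∨
      (¬ inPrimary A p.1 ∧ ¬ inPrimary A p.2 ∧
        ∀ k, p.1 < k → k < p.2 → ¬ inPrimary A k) := by
  intro p hp
  by_cases h₁ : inPrimary A p.1
  · exact Or.inl ⟨h₁, h₁.tail (Or.inl hp)⟩
  refine Or.inr ⟨h₁, fun h₂ => h₁ (h₂.tail (Or.inr hp)), fun k hk₁ hk₂ hk => h₁ ?_⟩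
  have h_one : ¬ (p.1 < 1 ∧ 1 < p.2) := fun h => by
    have := (hA.1.1 p hp).1
    omega
  exact hA.1.reflTransGen_left_of_mem_Ioo hp h_one hk ⟨hk₁, hk₂⟩
end Paper
end

section
/- For every integer n ≥ 2, the number c_n of connected zigzag stacks on [n] (zigzag stacks whose underlying graph on the vertex set [n] is connected) equals n − 1. -/
open PowerSeries

namespace Paper

/-!
In a connected zigzag stack on an interval `[a, b]` the outer arc `(a, b)` is present, and
besides it `a` carries at most one more arc `(a, j)` (put `j = a` if there is none). No other
arc passes over the gap between `j` and `j + 1`, so the stack is `(a, b)` on top of a connected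
zigzag stack on `[a, j]` in which `a` has degree at most one and one on `[j + 1, b]` in which `b`
has degree at most one; conversely, any two such stacks glue to a connected zigzag stack.
Applied to the pieces, the same decomposition shows that a connected zigzag stack on an
interval with an endpoint of degree one is unique: a zigzag path spiralling inwards. Hence the
connected zigzag stacks on `[a, b]` correspond to the split points `j ∈ [a, b)`.
-/

section Degrees

variable {A B C : Arcs} {p : ℕ × ℕ}

lemma ld_mono (h : A ⊆ B) (v : ℕ) : ld A v ≤ ld B v :=
  Finset.card_le_card (Finset.filter_subset_filter _ h)

lemma rd_mono (h : A ⊆ B) (v : ℕ) : rd A v ≤ rd B v :=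
  Finset.card_le_card (Finset.filter_subset_filter _ h)

lemma one_le_ld_of_mem (h : p ∈ A) : 1 ≤ ld A p.2 :=
  Finset.card_pos.2 ⟨p, Finset.mem_filter.2 ⟨h, rfl⟩⟩

lemma one_le_rd_of_mem (h : p ∈ A) : 1 ≤ rd A p.1 :=
  Finset.card_pos.2 ⟨p, Finset.mem_filter.2 ⟨h, rfl⟩⟩

lemma ld_insert_of_notMem (hp : p ∉ A) (v : ℕ) :
    ld (insert p A) v = ld A v + if p.2 = v then 1 else 0 := by
  unfold ld
  rw [Finset.filter_insert]
  split_ifs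
  · exact Finset.card_insert_of_notMem fun h => hp (Finset.mem_filter.1 h).1
  · rfl

lemma rd_insert_of_notMem (hp : p ∉ A) (v : ℕ) :
    rd (insert p A) v = rd A v + if p.1 = v then 1 else 0 := by
  unfold rd
  rw [Finset.filter_insert]
  split_ifs
  · exact Finset.card_insert_of_notMem fun h => hp (Finset.mem_filter.1 h).1
  · rfl

lemma ld_union_of_disjoint (h : Disjoint B C) (v : ℕ) : ld (B ∪ C) v = ld B v + ld C v := by
  unfold ld
  rw [Finset.filter_union, Finset.card_union_of_disjoint (Finset.disjoint_filter_filter h)]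

lemma rd_union_of_disjoint (h : Disjoint B C) (v : ℕ) : rd (B ∪ C) v = rd B v + rd C v := by
  unfold rd
  rw [Finset.filter_union, Finset.card_union_of_disjoint (Finset.disjoint_filter_filter h)]

end Degrees

section Reachability

variable {A B : Arcs}

instance (A : Arcs) : Std.Symm (adj A) := ⟨fun _ _ h => h.symm⟩

lemma of_reflTransGen_adj {S : ℕ → Prop} (hS : ∀ u w, adj A u w → S u → S w) {u v : ℕ}
    (h : Relation.ReflTransGen (adj A) u v) (hu : S u) : S v := by
  induction h with
  | refl => exact hu
  | tail _ hcd ih => exact hS _ _ hcd ih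

lemma reflTransGen_adj_mono (h : A ⊆ B) {u v : ℕ} (huv : Relation.ReflTransGen (adj A) u v) :
    Relation.ReflTransGen (adj B) u v :=
  Relation.ReflTransGen.mono (fun _ _ => Or.imp (@h _) (@h _)) _ _ huv

/-- Each excursion of the walk out of `S` leaves and re-enters `S` at `x`, so it can be cut out. -/
lemma reflTransGen_adj_of_cut {S : ℕ → Prop} {x : ℕ} (hB : ∀ p ∈ A, S p.1 → S p.2 → p ∈ B)
    (hcut : ∀ u w, adj A u w → S u → ¬ S w → u = x) {u v : ℕ}
    (h : Relation.ReflTransGen (adj A) u v) (hu : S u) (hv : S v) :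
    Relation.ReflTransGen (adj B) u v := by
  have hadj : ∀ c d, adj A c d → S c → S d → adj B c d := by
    rintro c d (h | h) hc hd
    · exact Or.inl (hB _ h hc hd)
    · exact Or.inr (hB _ h hd hc)
  have key : ∀ w, Relation.ReflTransGen (adj A) u w →
      (S w → Relation.ReflTransGen (adj B) u w) ∧ (¬ S w → Relation.ReflTransGen (adj B) u x) := by
    intro w hw
    induction hw with
    | refl => exact ⟨fun _ => .refl, fun h => absurd hu h⟩
    | @tail c d _ hcd ih =>
      by_cases hc : S c <;> by_cases hd : S d
      · exact ⟨fun _ => (ih.1 hc).tail (hadj c d hcd hc hd), fun h => absurd hd h⟩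
      · exact ⟨fun h => absurd h hd, fun _ => hcut c d hcd hc hd ▸ ih.1 hc⟩
      · exact ⟨fun _ => hcut d c hcd.symm hd hc ▸ ih.2 hc, fun h => absurd hd h⟩
      · exact ⟨fun h => absurd h hd, fun _ => ih.2 hc⟩
  exact (key v h).1 hv

end Reachability

structure IsConnZigzagOn (a b : ℕ) (A : Arcs) : Prop where
  mem_Icc : ∀ p ∈ A, a ≤ p.1 ∧ p.1 < p.2 ∧ p.2 ≤ b
  not_crossing : ∀ p ∈ A, ∀ q ∈ A, ¬ Crossing p q
  deg_le_two : ∀ v, deg A v ≤ 2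
  not_ld_rd : ∀ v, ¬ (1 ≤ ld A v ∧ 1 ≤ rd A v)
  reach : ∀ u v, a ≤ u → u ≤ b → a ≤ v → v ≤ b → Relation.ReflTransGen (adj A) u v

lemma isZigzag_and_connectedOn_iff {n : ℕ} {A : Arcs} :
    IsZigzag n A ∧ ConnectedOn n A ↔ IsConnZigzagOn 1 n A :=
  ⟨fun ⟨⟨⟨h₁, h₂⟩, h₃, h₄⟩, h₅⟩ => ⟨h₁, h₂, h₃, h₄, h₅⟩,
    fun ⟨h₁, h₂, h₃, h₄, h₅⟩ => ⟨⟨⟨h₁, h₂⟩, h₃, h₄⟩, h₅⟩⟩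

lemma isConnZigzagOn_self_iff {a : ℕ} {A : Arcs} : IsConnZigzagOn a a A ↔ A = ∅ := by
  refine ⟨fun h => Finset.eq_empty_of_forall_notMem fun p hp => ?_, ?_⟩
  · have := h.mem_Icc p hp
    omega
  · rintro rfl
    refine ⟨by simp, by simp, fun v => by simp [deg, ld, rd], fun v => by simp [ld], ?_⟩
    intro u v _ _ _ _
    obtain rfl : u = v := by omega
    exact .refl

namespace IsConnZigzagOn

variable {a b j : ℕ} {A B C : Arcs}

lemma of_subset (hA : IsConnZigzagOn a b A) (hBA : B ⊆ A) {c d : ℕ}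
    (hB : ∀ p ∈ B, c ≤ p.1 ∧ p.2 ≤ d)
    (hreach : ∀ u v, c ≤ u → u ≤ d → c ≤ v → v ≤ d → Relation.ReflTransGen (adj B) u v) :
    IsConnZigzagOn c d B where
  mem_Icc p hp := ⟨(hB p hp).1, (hA.mem_Icc p (hBA hp)).2.1, (hB p hp).2⟩
  not_crossing p hp q hq := hA.not_crossing p (hBA hp) q (hBA hq)
  deg_le_two v := (add_le_add (ld_mono hBA v) (rd_mono hBA v)).trans (hA.deg_le_two v)
  not_ld_rd v h := hA.not_ld_rd v ⟨h.1.trans (ld_mono hBA v), h.2.trans (rd_mono hBA v)⟩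
  reach := hreach

lemma ld_eq_zero (hA : IsConnZigzagOn a b A) {v : ℕ} (hv : v ≤ a ∨ b < v) : ld A v = 0 :=
  Finset.card_eq_zero.2 <| Finset.filter_eq_empty_iff.2 fun p hp => by
    have := hA.mem_Icc p hp
    omega

lemma rd_eq_zero (hA : IsConnZigzagOn a b A) {v : ℕ} (hv : v < a ∨ b ≤ v) : rd A v = 0 :=
  Finset.card_eq_zero.2 <| Finset.filter_eq_empty_iff.2 fun p hp => by
    have := hA.mem_Icc p hp
    omega

/-- `j` is the farthest neighbour of `a` up to `m`; an arc over the gap after `j` that does not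
start at `a` would cross `(a, j)` or start at `j`. -/
lemma exists_cut (hA : IsConnZigzagOn a b A) {m : ℕ} (ham : a ≤ m) :
    ∃ j, a ≤ j ∧ j ≤ m ∧ (j = a ∨ (a, j) ∈ A) ∧
      ∀ p ∈ A, p.1 ≤ j → j < p.2 → p.1 = a ∧ m < p.2 := by
  classical
  set j := Nat.findGreatest (fun y => y = a ∨ (a, y) ∈ A) m
  have hj : j = a ∨ (a, j) ∈ A :=
    Nat.findGreatest_spec (P := fun y => y = a ∨ (a, y) ∈ A) ham (Or.inl rfl)
  refine ⟨j, Nat.le_findGreatest ham (Or.inl rfl), Nat.findGreatest_le m, hj,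
    fun p hp h₁ h₂ => ?_⟩
  have hp₁ : p.1 = a := by
    by_contra hne
    have hpa := (hA.mem_Icc p hp).1
    have haj : (a, j) ∈ A := hj.resolve_left (by omega)
    rcases h₁.lt_or_eq with h₁ | h₁
    · exact hA.not_crossing _ haj _ hp ⟨by simp only; omega, h₁, h₂⟩
    · exact hA.not_ld_rd j ⟨one_le_ld_of_mem haj, h₁ ▸ one_le_rd_of_mem hp⟩
  refine ⟨hp₁, not_le.1 fun hle => ?_⟩
  have := Nat.le_findGreatest (P := fun y => y = a ∨ (a, y) ∈ A) hle
    (Or.inr (hp₁ ▸ hp : (a, p.2) ∈ A))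
  omega

lemma top_mem (hA : IsConnZigzagOn a b A) (hab : a < b) : (a, b) ∈ A := by
  obtain ⟨j, haj, hjb, hj, hcut⟩ := hA.exists_cut hab.le
  have hbj : b ≤ j := by
    refine of_reflTransGen_adj (S := (· ≤ j)) ?_ (hA.reach a b le_rfl hab.le hab.le le_rfl) haj
    rintro u w (h | h) hu
    · by_contra hw
      have := hA.mem_Icc _ h
      have := hcut _ h hu (not_le.1 hw)
      omega
    · have := hA.mem_Icc _ h
      omega
  rcases hj with hj | hj
  · omega
  · rwa [show j = b by omega] at hj

lemma le_of_rd_eq_zero (hA : IsConnZigzagOn a b A) (h : rd A a = 0) : b ≤ a := by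
  by_contra hab
  have : 1 ≤ rd A a := one_le_rd_of_mem (hA.top_mem (not_le.1 hab))
  omega

lemma le_of_ld_eq_zero (hA : IsConnZigzagOn a b A) (h : ld A b = 0) : b ≤ a := by
  by_contra hab
  have : 1 ≤ ld A b := one_le_ld_of_mem (hA.top_mem (not_le.1 hab))
  omega

end IsConnZigzagOn

def glue (a b : ℕ) (B C : Arcs) : Arcs := insert (a, b) (B ∪ C)

lemma mem_glue {a b : ℕ} {B C : Arcs} {p : ℕ × ℕ} :
    p ∈ glue a b B C ↔ p = (a, b) ∨ p ∈ B ∨ p ∈ C := by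
  simp [glue]

namespace IsConnZigzagOn

variable {a b j : ℕ} {A B C : Arcs}

lemma ld_rd_glue (hB : IsConnZigzagOn a j B) (hC : IsConnZigzagOn (j + 1) b C) (haj : a ≤ j)
    (hjb : j < b) (v : ℕ) :
    ld (glue a b B C) v = ld B v + ld C v + (if b = v then 1 else 0) ∧
      rd (glue a b B C) v = rd B v + rd C v + (if a = v then 1 else 0) := by
  have hdisj : Disjoint B C := Finset.disjoint_left.2 fun p hpB hpC => by
    have := hB.mem_Icc p hpB
    have := hC.mem_Icc p hpC
    omega
  have hnot : (a, b) ∉ B ∪ C := fun h => by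
    rcases Finset.mem_union.1 h with h | h
    · have := hB.mem_Icc _ h; simp only at this; omega
    · have := hC.mem_Icc _ h; simp only at this; omega
  rw [glue, ld_insert_of_notMem hnot, rd_insert_of_notMem hnot, ld_union_of_disjoint hdisj,
    rd_union_of_disjoint hdisj]
  exact ⟨rfl, rfl⟩

end IsConnZigzagOn

section Glue

variable {a b j : ℕ} {B C : Arcs}

lemma deg_glue_le_two_and_not_ld_rd (hB : IsConnZigzagOn a j B)
    (hC : IsConnZigzagOn (j + 1) b C) (hBa : rd B a ≤ 1) (hCb : ld C b ≤ 1) (haj : a ≤ j)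
    (hjb : j < b) (v : ℕ) :
    deg (glue a b B C) v ≤ 2 ∧ ¬ (1 ≤ ld (glue a b B C) v ∧ 1 ≤ rd (glue a b B C) v) := by
  obtain ⟨hld, hrd⟩ := hB.ld_rd_glue hC haj hjb v
  have hCv : v ≤ j → ld C v = 0 ∧ rd C v = 0 :=
    fun hv => ⟨hC.ld_eq_zero (by omega), hC.rd_eq_zero (by omega)⟩
  have hBv : j < v → ld B v = 0 ∧ rd B v = 0 :=
    fun hv => ⟨hB.ld_eq_zero (by omega), hB.rd_eq_zero (by omega)⟩
  have hBa₀ : ld B a = 0 := hB.ld_eq_zero (by omega)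
  have hCb₀ : rd C b = 0 := hC.rd_eq_zero (by omega)
  have := hB.deg_le_two v
  have := hC.deg_le_two v
  have := hB.not_ld_rd v
  have := hC.not_ld_rd v
  unfold deg at *
  rw [hld, hrd]
  split_ifs <;> subst_vars <;> omega

lemma isConnZigzagOn_glue (hB : IsConnZigzagOn a j B) (hC : IsConnZigzagOn (j + 1) b C)
    (hBa : rd B a ≤ 1) (hCb : ld C b ≤ 1) (haj : a ≤ j) (hjb : j < b) :
    IsConnZigzagOn a b (glue a b B C) := by
  have hpos : ∀ p ∈ glue a b B C, p = (a, b) ∨ (p ∈ B ∧ a ≤ p.1 ∧ p.1 < p.2 ∧ p.2 ≤ j) ∨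
      (p ∈ C ∧ j + 1 ≤ p.1 ∧ p.1 < p.2 ∧ p.2 ≤ b) := fun p hp => by
    rcases mem_glue.1 hp with h | h | h
    exacts [Or.inl h, Or.inr (Or.inl ⟨h, hB.mem_Icc p h⟩), Or.inr (Or.inr ⟨h, hC.mem_Icc p h⟩)]
  have hreach : ∀ v, a ≤ v → v ≤ b → Relation.ReflTransGen (adj (glue a b B C)) v a := by
    intro v hav hvb
    rcases le_or_gt v j with hvj | hvj
    · exact reflTransGen_adj_mono (fun p hp => mem_glue.2 (Or.inr (Or.inl hp)))
        (hB.reach v a hav hvj le_rfl haj)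
    · exact (reflTransGen_adj_mono (fun p hp => mem_glue.2 (Or.inr (Or.inr hp)))
        (hC.reach v b hvj hvb (by omega) le_rfl)).tail (Or.inr (mem_glue.2 (Or.inl rfl)))
  refine ⟨fun p hp => ?_, fun p hp q hq hpq => ?_,
    fun v => (deg_glue_le_two_and_not_ld_rd hB hC hBa hCb haj hjb v).1,
    fun v => (deg_glue_le_two_and_not_ld_rd hB hC hBa hCb haj hjb v).2,
    fun u v hau hub hav hvb => (hreach u hau hub).trans (symm (hreach v hav hvb))⟩
  · rcases hpos p hp with rfl | ⟨-, h⟩ | ⟨-, h⟩ <;> (try simp only) <;> omega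
  · obtain ⟨h₁, h₂, h₃⟩ := hpq
    rcases hpos p hp with rfl | ⟨hp, hp'⟩ | ⟨hp, hp'⟩ <;>
      rcases hpos q hq with rfl | ⟨hq, hq'⟩ | ⟨hq, hq'⟩ <;>
      first
        | exact hB.not_crossing p hp q hq ⟨h₁, h₂, h₃⟩
        | exact hC.not_crossing p hp q hq ⟨h₁, h₂, h₃⟩
        | ((try simp only at h₁ h₂ h₃); omega)

end Glue

namespace IsConnZigzagOn

variable {a b j : ℕ} {A : Arcs}

lemma filter_snd_le (hA : IsConnZigzagOn a b A)
    (hover : ∀ p ∈ A, p.1 ≤ j → j < p.2 → p = (a, b)) (hjb : j < b) :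
    IsConnZigzagOn a j (A.filter fun p => p.2 ≤ j) := by
  refine hA.of_subset (Finset.filter_subset _ _)
    (fun p hp => ⟨(hA.mem_Icc p (Finset.mem_filter.1 hp).1).1, (Finset.mem_filter.1 hp).2⟩)
    fun u v hau huj hav hvj => reflTransGen_adj_of_cut (S := (· ≤ j)) (x := a)
      (fun p hp _ h => Finset.mem_filter.2 ⟨hp, h⟩) ?_
      (hA.reach u v hau (by omega) hav (by omega)) huj hvj
  rintro u w (h | h) hu hw
  · exact congrArg Prod.fst (hover _ h hu (not_le.1 hw))
  · have := hA.mem_Icc _ h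
    omega

lemma filter_lt_fst (hA : IsConnZigzagOn a b A)
    (hover : ∀ p ∈ A, p.1 ≤ j → j < p.2 → p = (a, b)) (haj : a ≤ j) :
    IsConnZigzagOn (j + 1) b (A.filter fun p => j < p.1) := by
  refine hA.of_subset (Finset.filter_subset _ _)
    (fun p hp => ⟨(Finset.mem_filter.1 hp).2, (hA.mem_Icc p (Finset.mem_filter.1 hp).1).2.2⟩)
    fun u v hju hub hjv hvb => reflTransGen_adj_of_cut (S := (j < ·)) (x := b)
      (fun p hp h _ => Finset.mem_filter.2 ⟨hp, h⟩) ?_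
      (hA.reach u v (by omega) hub (by omega) hvb) hju hjv
  rintro u w (h | h) hu hw
  · have := hA.mem_Icc _ h
    omega
  · exact congrArg Prod.snd (hover _ h (not_lt.1 hw) hu)

lemma eq_glue_filter (hA : IsConnZigzagOn a b A)
    (hover : ∀ p ∈ A, p.1 ≤ j → j < p.2 → p = (a, b)) (hab : a < b) :
    A = glue a b (A.filter fun p => p.2 ≤ j) (A.filter fun p => j < p.1) := by
  ext p
  rw [mem_glue, Finset.mem_filter, Finset.mem_filter]
  constructor
  · intro hp
    by_cases h₁ : p.1 ≤ j
    · by_cases h₂ : p.2 ≤ j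
      · exact Or.inr (Or.inl ⟨hp, h₂⟩)
      · exact Or.inl (hover p hp h₁ (not_le.1 h₂))
    · exact Or.inr (Or.inr ⟨hp, not_le.1 h₁⟩)
  · rintro (rfl | ⟨hp, -⟩ | ⟨hp, -⟩)
    exacts [hA.top_mem hab, hp, hp]

lemma exists_glue (hA : IsConnZigzagOn a b A) (hab : a < b) :
    ∃ j B C, a ≤ j ∧ j < b ∧ IsConnZigzagOn a j B ∧ rd B a ≤ 1 ∧
      IsConnZigzagOn (j + 1) b C ∧ ld C b ≤ 1 ∧ A = glue a b B C := by
  obtain ⟨j, haj, hjb, -, hcut⟩ := hA.exists_cut (m := b - 1) (by omega)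
  have hover : ∀ p ∈ A, p.1 ≤ j → j < p.2 → p = (a, b) := fun p hp h₁ h₂ => by
    have := hcut p hp h₁ h₂
    have := hA.mem_Icc p hp
    exact Prod.ext (by omega) (by omega)
  have hjb' : j < b := by omega
  have hB := hA.filter_snd_le hover hjb'
  have hC := hA.filter_lt_fst hover haj
  have hAeq := hA.eq_glue_filter hover hab
  refine ⟨j, _, _, haj, hjb', hB, ?_, hC, ?_, hAeq⟩
  · have hdeg := hA.deg_le_two a
    rw [hAeq, deg, (hB.ld_rd_glue hC haj hjb' a).2, hC.rd_eq_zero (v := a) (by omega)] at hdeg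
    simp only [add_zero, ↓reduceIte] at hdeg
    omega
  · have hdeg := hA.deg_le_two b
    rw [hAeq, deg, (hB.ld_rd_glue hC haj hjb' b).1, hB.ld_eq_zero (v := b) (by omega)] at hdeg
    simp only [zero_add, ↓reduceIte] at hdeg
    omega

end IsConnZigzagOn

/-- The zigzag path `a, b, a + 1, b - 1, a + 2, …`: its arcs are those whose endpoints sum to
`a + b` or `a + b + 1`. -/
def leftSpiral (a b : ℕ) : Arcs :=
  (Finset.Icc a b ×ˢ Finset.Icc a b).filter fun p =>
    p.1 < p.2 ∧ (p.1 + p.2 = a + b ∨ p.1 + p.2 = a + b + 1)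

/-- The mirror image `b, a, b - 1, a + 1, …` of `leftSpiral a b`. -/
def rightSpiral (a b : ℕ) : Arcs :=
  (Finset.Icc a b ×ˢ Finset.Icc a b).filter fun p =>
    p.1 < p.2 ∧ (p.1 + p.2 + 1 = a + b ∨ p.1 + p.2 = a + b)

section Spirals

variable {a b : ℕ} {A : Arcs}

lemma leftSpiral_self : leftSpiral a a = ∅ := by
  ext p
  simp only [leftSpiral, Finset.mem_filter, Finset.mem_product, Finset.mem_Icc,
    Finset.notMem_empty, iff_false]
  omega

lemma rightSpiral_self : rightSpiral a a = ∅ := by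
  ext p
  simp only [rightSpiral, Finset.mem_filter, Finset.mem_product, Finset.mem_Icc,
    Finset.notMem_empty, iff_false]
  omega

lemma leftSpiral_eq_glue (hab : a < b) : leftSpiral a b = glue a b ∅ (rightSpiral (a + 1) b) := by
  ext ⟨x, y⟩
  simp only [leftSpiral, rightSpiral, mem_glue, Finset.mem_filter, Finset.mem_product,
    Finset.mem_Icc, Finset.notMem_empty, Prod.mk.injEq, false_or]
  omega

lemma rightSpiral_eq_glue (hab : a < b) :
    rightSpiral a b = glue a b (leftSpiral a (b - 1)) ∅ := by
  ext ⟨x, y⟩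
  simp only [leftSpiral, rightSpiral, mem_glue, Finset.mem_filter, Finset.mem_product,
    Finset.mem_Icc, Finset.notMem_empty, Prod.mk.injEq, or_false]
  omega

lemma isConnZigzagOn_and_rd_le_one_iff_of_lt (hab : a < b)
    (ih : ∀ C, IsConnZigzagOn (a + 1) b C ∧ ld C b ≤ 1 ↔ C = rightSpiral (a + 1) b) :
    IsConnZigzagOn a b A ∧ rd A a ≤ 1 ↔ A = leftSpiral a b := by
  have hempty : IsConnZigzagOn a a ∅ := isConnZigzagOn_self_iff.2 rfl
  rw [leftSpiral_eq_glue hab]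
  constructor
  · rintro ⟨hA, hAa⟩
    obtain ⟨j, B, C, haj, hjb, hB, -, hC, hCb, rfl⟩ := hA.exists_glue hab
    rw [(hB.ld_rd_glue hC haj hjb a).2, hC.rd_eq_zero (by omega)] at hAa
    obtain rfl : j = a := le_antisymm (hB.le_of_rd_eq_zero (by simpa using hAa)) haj
    rw [isConnZigzagOn_self_iff.1 hB, (ih C).1 ⟨hC, hCb⟩]
  · rintro rfl
    obtain ⟨hC, hCb⟩ := (ih _).2 rfl
    refine ⟨isConnZigzagOn_glue hempty hC (by simp [rd]) hCb le_rfl hab, ?_⟩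
    rw [(hempty.ld_rd_glue hC le_rfl hab a).2, hC.rd_eq_zero (by omega)]
    simp [rd]

lemma isConnZigzagOn_and_ld_le_one_iff_of_lt (hab : a < b)
    (ih : ∀ B, IsConnZigzagOn a (b - 1) B ∧ rd B a ≤ 1 ↔ B = leftSpiral a (b - 1)) :
    IsConnZigzagOn a b A ∧ ld A b ≤ 1 ↔ A = rightSpiral a b := by
  have hempty : IsConnZigzagOn (b - 1 + 1) b ∅ := by
    rw [Nat.sub_add_cancel (by omega : 1 ≤ b)]
    exact isConnZigzagOn_self_iff.2 rfl
  rw [rightSpiral_eq_glue hab]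
  constructor
  · rintro ⟨hA, hAb⟩
    obtain ⟨j, B, C, haj, hjb, hB, hBa, hC, -, rfl⟩ := hA.exists_glue hab
    rw [(hB.ld_rd_glue hC haj hjb b).1, hB.ld_eq_zero (by omega)] at hAb
    obtain rfl : j = b - 1 := by
      have := hC.le_of_ld_eq_zero (by simpa using hAb)
      omega
    rw [Nat.sub_add_cancel (by omega : 1 ≤ b)] at hC
    rw [isConnZigzagOn_self_iff.1 hC, (ih B).1 ⟨hB, hBa⟩]
  · rintro rfl
    obtain ⟨hB, hBa⟩ := (ih _).2 rfl
    refine ⟨isConnZigzagOn_glue hB hempty hBa (by simp [ld]) (by omega) (by omega), ?_⟩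
    rw [(hB.ld_rd_glue hempty (by omega) (by omega) b).1, hB.ld_eq_zero (by omega)]
    simp [ld]

lemma isConnZigzagOn_and_end_le_one_iff (d : ℕ) :
    (∀ A, IsConnZigzagOn a (a + d) A ∧ rd A a ≤ 1 ↔ A = leftSpiral a (a + d)) ∧
      (∀ A, IsConnZigzagOn a (a + d) A ∧ ld A (a + d) ≤ 1 ↔ A = rightSpiral a (a + d)) := by
  induction d generalizing a with
  | zero =>
    rw [add_zero, leftSpiral_self, rightSpiral_self]
    refine ⟨fun A => ?_, fun A => ?_⟩ <;> rw [← isConnZigzagOn_self_iff] <;>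
      refine and_iff_left_of_imp fun h => ?_
    · rw [h.rd_eq_zero (Or.inr le_rfl)]
      exact zero_le_one
    · rw [h.ld_eq_zero (Or.inl le_rfl)]
      exact zero_le_one
  | succ d ih =>
    refine ⟨fun A => isConnZigzagOn_and_rd_le_one_iff_of_lt (by omega) ?_,
      fun A => isConnZigzagOn_and_ld_le_one_iff_of_lt (by omega) ?_⟩
    · rw [show a + (d + 1) = a + 1 + d by omega]
      exact ih.2
    · rw [show a + (d + 1) - 1 = a + d by omega]
      exact ih.1

end Spirals

section Count

variable {a b : ℕ} {A : Arcs}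

lemma isConnZigzagOn_and_rd_le_one_iff (hab : a ≤ b) :
    IsConnZigzagOn a b A ∧ rd A a ≤ 1 ↔ A = leftSpiral a b := by
  obtain ⟨d, rfl⟩ := Nat.exists_eq_add_of_le hab
  exact (isConnZigzagOn_and_end_le_one_iff d).1 A

lemma isConnZigzagOn_and_ld_le_one_iff (hab : a ≤ b) :
    IsConnZigzagOn a b A ∧ ld A b ≤ 1 ↔ A = rightSpiral a b := by
  obtain ⟨d, rfl⟩ := Nat.exists_eq_add_of_le hab
  exact (isConnZigzagOn_and_end_le_one_iff d).2 A

lemma isConnZigzagOn_iff_exists (hab : a < b) :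
    IsConnZigzagOn a b A ↔
      ∃ j ∈ Finset.Ico a b, glue a b (leftSpiral a j) (rightSpiral (j + 1) b) = A := by
  constructor
  · intro hA
    obtain ⟨j, B, C, haj, hjb, hB, hBa, hC, hCb, rfl⟩ := hA.exists_glue hab
    rw [(isConnZigzagOn_and_rd_le_one_iff haj).1 ⟨hB, hBa⟩,
      (isConnZigzagOn_and_ld_le_one_iff hjb).1 ⟨hC, hCb⟩]
    exact ⟨j, Finset.mem_Ico.2 ⟨haj, hjb⟩, rfl⟩
  · rintro ⟨j, hj, rfl⟩
    obtain ⟨haj, hjb⟩ := Finset.mem_Ico.1 hj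
    obtain ⟨hB, hBa⟩ := (isConnZigzagOn_and_rd_le_one_iff haj).2 rfl
    obtain ⟨hC, hCb⟩ := (isConnZigzagOn_and_ld_le_one_iff hjb).2 rfl
    exact isConnZigzagOn_glue hB hC hBa hCb haj hjb

lemma mem_glue_spirals_iff {j y : ℕ} (haj : a ≤ j) :
    (a, y) ∈ glue a b (leftSpiral a j) (rightSpiral (j + 1) b) ↔ y = b ∨ a < j ∧ y = j := by
  simp only [leftSpiral, rightSpiral, mem_glue, Finset.mem_filter, Finset.mem_product,
    Finset.mem_Icc, Prod.mk.injEq, true_and]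
  omega

lemma injOn_glue_spirals :
    Set.InjOn (fun j => glue a b (leftSpiral a j) (rightSpiral (j + 1) b)) (Finset.Ico a b) := by
  have hle : ∀ j ∈ Finset.Ico a b, ∀ k ∈ Finset.Ico a b,
      glue a b (leftSpiral a j) (rightSpiral (j + 1) b) =
        glue a b (leftSpiral a k) (rightSpiral (k + 1) b) → k ≤ j := by
    intro j hj k hk h
    simp only [Finset.mem_Ico] at hj hk
    by_contra hjk
    have := (mem_glue_spirals_iff hj.1).1 (h ▸ (mem_glue_spirals_iff (y := k) hk.1).2 (by omega))
    omega
  exact fun j hj k hk h => le_antisymm (hle k hk j hj h.symm) (hle j hj k hk h)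

lemma card_isConnZigzagOn (hab : a < b) :
    Nat.card {A : Arcs // IsConnZigzagOn a b A} = b - a := by
  have h : ∀ A, IsConnZigzagOn a b A ↔
      A ∈ (Finset.Ico a b).image fun j => glue a b (leftSpiral a j) (rightSpiral (j + 1) b) := by
    intro A
    rw [isConnZigzagOn_iff_exists hab, Finset.mem_image]
  rw [Nat.card_congr (Equiv.subtypeEquivRight h), Nat.card_eq_finsetCard,
    Finset.card_image_of_injOn injOn_glue_spirals, Nat.card_Ico]

end Count

/-- for `n ≥ 2`, the number of connected zigzag stacks on `[n]` is `n − 1`. -/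
theorem connected_zigzag_count (n : ℕ) (hn : 2 ≤ n) : connZigzagCount n = n - 1 := by
  rw [connZigzagCount,
    Nat.card_congr (Equiv.subtypeEquivRight fun A => isZigzag_and_connectedOn_iff),
    card_isConnZigzagOn (by omega)]
end Paper
end

section
/- Fix integers m ≥ 2 and n ≥ 1. The map θ_m, which sends a stack S on [n+m−1] to the diagram θ_m(S) on [n] whose arc set is {(i, j−m+1) : (i,j) an arc of S}, is a well-defined bijection from the set of m-regular linear stacks on [n+m−1] onto the set of m-reduced zigzag stacks on [n]. -/
open PowerSeries

namespace Paper

/-!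
`θ_m` keeps left endpoints and moves right endpoints `m − 1` steps to the left, so
`rd (θ_m A) v = rd A v` and `ld (θ_m A) v = ld A (v + m − 1)`; the inverse moves them back.
In a stack whose arcs have length `≥ m`, no arc can end strictly inside `(v, v + m)` while
another starts at `v`, since the two would cross. With `m ≥ 2` this gives the zigzag property
and condition (2) of `θ_m A`, and condition (1) at `i` is just `deg A (i + m − 1) ≤ 2`.
Conversely, if two stretched arcs `(i, j + m − 1)`, `(k, l + m − 1)` cross, then `k < j`
makes the original arcs cross, `k = j` violates the zigzag property, and `k > j` violates
condition (2).
-/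

lemma ld_pos_iff {A : Arcs} {v : ℕ} : 0 < ld A v ↔ ∃ u, (u, v) ∈ A := by
  simp [ld, Finset.card_pos, Finset.Nonempty]

lemma rd_pos_iff {A : Arcs} {v : ℕ} : 0 < rd A v ↔ ∃ w, (v, w) ∈ A := by
  simp [rd, Finset.card_pos, Finset.Nonempty]

lemma ld_eq_zero_iff {A : Arcs} {v : ℕ} : ld A v = 0 ↔ ∀ u, (u, v) ∉ A := by
  simpa using (ld_pos_iff (A := A) (v := v)).not

lemma rd_eq_zero_iff {A : Arcs} {v : ℕ} : rd A v = 0 ↔ ∀ w, (v, w) ∉ A := by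
  simpa using (rd_pos_iff (A := A) (v := v)).not

def thetaInv (m : ℕ) (B : Arcs) : Arcs := B.image fun p => (p.1, p.2 + m - 1)

section Theta

variable {m : ℕ} {A B : Arcs}

lemma injOn_theta_arc (hA : ∀ p ∈ A, m ≤ p.2) :
    Set.InjOn (fun p : ℕ × ℕ => (p.1, p.2 - m + 1)) A := by
  rintro ⟨i, j⟩ hij ⟨i', j'⟩ hij' h
  have := hA _ hij
  have := hA _ hij'
  simp only [Prod.mk.injEq] at h ⊢
  omega

lemma rd_theta (hA : ∀ p ∈ A, m ≤ p.2) (v : ℕ) : rd (theta m A) v = rd A v := by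
  rw [rd, theta, Finset.filter_image, Finset.card_image_of_injOn
    ((injOn_theta_arc hA).mono (Finset.coe_subset.mpr (Finset.filter_subset _ _)))]
  rfl

lemma ld_theta (hm : 1 ≤ m) (hA : ∀ p ∈ A, m ≤ p.2) (v : ℕ) :
    ld (theta m A) v = ld A (v + m - 1) := by
  rw [ld, theta, Finset.filter_image, Finset.card_image_of_injOn
    ((injOn_theta_arc hA).mono (Finset.coe_subset.mpr (Finset.filter_subset _ _)))]
  congr 1
  refine Finset.filter_congr fun p hp => ?_
  have := hA p hp
  dsimp only
  omega

lemma thetaInv_theta (hA : ∀ p ∈ A, m ≤ p.2) : thetaInv m (theta m A) = A := by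
  rw [thetaInv, theta, Finset.image_image]
  refine (Finset.image_congr fun p hp => ?_).trans A.image_id
  have := hA p hp
  exact Prod.ext rfl (by dsimp only [Function.comp_apply, id]; omega)

lemma theta_thetaInv (hB : ∀ p ∈ B, 1 ≤ p.2) : theta m (thetaInv m B) = B := by
  rw [thetaInv, theta, Finset.image_image]
  refine (Finset.image_congr fun p hp => ?_).trans B.image_id
  have := hB p hp
  exact Prod.ext rfl (by dsimp only [Function.comp_apply, id]; omega)

lemma le_snd_of_mem_thetaInv (hB : ∀ p ∈ B, 1 ≤ p.2) : ∀ p ∈ thetaInv m B, m ≤ p.2 := by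
  simp only [thetaInv, Finset.mem_image]
  rintro _ ⟨p, hp, rfl⟩
  have := hB p hp
  dsimp only
  omega

lemma rd_thetaInv (hB : ∀ p ∈ B, 1 ≤ p.2) (v : ℕ) : rd (thetaInv m B) v = rd B v := by
  conv_rhs => rw [← theta_thetaInv (m := m) hB]
  exact (rd_theta (le_snd_of_mem_thetaInv hB) v).symm

lemma ld_thetaInv (hm : 1 ≤ m) (hB : ∀ p ∈ B, 1 ≤ p.2) (v : ℕ) :
    ld (thetaInv m B) (v + m - 1) = ld B v := by
  conv_rhs => rw [← theta_thetaInv (m := m) hB]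
  exact (ld_theta hm (le_snd_of_mem_thetaInv hB) v).symm

end Theta

section Regular

variable {m N : ℕ} {A : Arcs}

lemma RegLinear.le_snd (hA : RegLinear m N A) : ∀ p ∈ A, m ≤ p.2 :=
  fun p hp => (Nat.le_add_left m p.1).trans (hA.2.1 p hp)

/-- Otherwise arcs `(u, w)` and `(v, x)` of length `≥ m` would cross. -/
lemma RegLinear.ld_eq_zero_or_rd_eq_zero (hA : RegLinear m N A) {v w : ℕ} (hvw : v < w)
    (hwv : w < v + m) : ld A w = 0 ∨ rd A v = 0 := by
  by_contra! h
  obtain ⟨u, hu⟩ := ld_pos_iff.mp (Nat.pos_of_ne_zero h.1)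
  obtain ⟨x, hx⟩ := rd_pos_iff.mp (Nat.pos_of_ne_zero h.2)
  have := hA.2.1 _ hu
  have := hA.2.1 _ hx
  exact hA.1.2 _ hu _ hx ⟨show u < v by omega, show v < w by omega, show w < x by omega⟩

end Regular

section Maps

variable {m n : ℕ} {A B : Arcs}

lemma RegLinear.isStack_theta (hm : 1 ≤ m) (hA : RegLinear m (n + m - 1) A) :
    IsStack n (theta m A) := by
  refine ⟨?_, ?_⟩
  · intro _ hp
    simp only [theta, Finset.mem_image] at hp
    obtain ⟨p, hp, rfl⟩ := hp
    have := hA.1.1 p hp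
    have := hA.2.1 p hp
    dsimp only
    omega
  · intro _ hp _ hq
    simp only [theta, Finset.mem_image] at hp hq
    obtain ⟨p, hp, rfl⟩ := hp
    obtain ⟨q, hq, rfl⟩ := hq
    rintro ⟨h₁, h₂, h₃⟩
    have := hA.le_snd p hp
    have := hA.le_snd q hq
    exact hA.1.2 p hp q hq ⟨h₁, by dsimp only at h₂; omega, by dsimp only at h₃; omega⟩

lemma RegLinear.mRed_theta (hm : 2 ≤ m) (hA : RegLinear m (n + m - 1) A) :
    MRed m n (theta m A) := by
  have hld := ld_theta (by omega) hA.le_snd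
  have hrd := rd_theta hA.le_snd
  have hsplit : ∀ v, ld A (v + m - 1) = 0 ∨ rd A v = 0 := fun v =>
    hA.ld_eq_zero_or_rd_eq_zero (by omega) (by omega)
  refine ⟨⟨hA.isStack_theta (by omega), fun v => ?_, fun v => ?_⟩, fun i _ _ => ?_,
    fun i j _ hij _ hi hj => ?_⟩
  · have hv := hA.2.2 v
    have hw := hA.2.2 (v + m - 1)
    rw [deg] at hv hw ⊢
    rw [hld, hrd]
    have := hsplit v
    omega
  · have := hsplit v
    rw [hld, hrd]
    omega
  · rw [hld, hrd]
    exact hA.2.2 (i + m - 1)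
  · rw [hld] at hi
    rw [hrd] at hj
    by_contra
    have := hA.ld_eq_zero_or_rd_eq_zero (v := j) (w := i + m - 1) (by omega) (by omega)
    omega

lemma MRed.snd_pos (hB : MRed m n B) : ∀ p ∈ B, 1 ≤ p.2 := fun p hp => by
  have := hB.1.1.1 p hp
  omega

lemma MRed.isStack_thetaInv (hm : 1 ≤ m) (hB : MRed m n B) :
    IsStack (n + m - 1) (thetaInv m B) := by
  obtain ⟨⟨⟨hdiag, hcross⟩, -, hzig⟩, -, hgap⟩ := hB
  refine ⟨?_, ?_⟩
  · intro _ hp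
    simp only [thetaInv, Finset.mem_image] at hp
    obtain ⟨p, hp, rfl⟩ := hp
    have := hdiag p hp
    dsimp only
    omega
  · intro _ hp _ hq
    simp only [thetaInv, Finset.mem_image] at hp hq
    obtain ⟨p, hp, rfl⟩ := hp
    obtain ⟨q, hq, rfl⟩ := hq
    rintro ⟨h₁, h₂, h₃⟩
    dsimp only at h₁ h₂ h₃
    have := hdiag p hp
    have := hdiag q hq
    have hl := ld_pos_iff.mpr ⟨_, hp⟩
    have hr := rd_pos_iff.mpr ⟨_, hq⟩
    rcases lt_trichotomy q.1 p.2 with h | h | h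
    · exact hcross p hp q hq ⟨h₁, h, by omega⟩
    · exact hzig q.1 ⟨h ▸ hl, hr⟩
    · have := hgap p.2 q.1 (by omega) h (by omega) hl hr
      omega

lemma MRed.regLinear_thetaInv (hm : 1 ≤ m) (hB : MRed m n B) :
    RegLinear m (n + m - 1) (thetaInv m B) := by
  refine ⟨hB.isStack_thetaInv hm, ?_, fun v => ?_⟩
  · intro _ hp
    simp only [thetaInv, Finset.mem_image] at hp
    obtain ⟨p, hp, rfl⟩ := hp
    have := hB.1.1.1 p hp
    dsimp only
    omega
  rw [deg, rd_thetaInv hB.snd_pos]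
  have hdeg := hB.1.2.1
  rcases Nat.lt_or_ge v m with hv | hv
  · have : ld (thetaInv m B) v = 0 :=
      ld_eq_zero_iff.mpr fun u hu => by
        have := le_snd_of_mem_thetaInv hB.snd_pos _ hu
        omega
    have := hdeg v
    rw [deg] at this
    omega
  obtain ⟨i, rfl⟩ : ∃ i, v = i + m - 1 := ⟨v - m + 1, by omega⟩
  rw [ld_thetaInv hm hB.snd_pos]
  rcases le_or_gt (i + m - 1) n with hv | hv
  · exact hB.2.1 i (by omega) (by omega)
  · have : rd B (i + m - 1) = 0 :=
      rd_eq_zero_iff.mpr fun w hw => by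
        have := hB.1.1.1 _ hw
        omega
    have := hdeg i
    rw [deg] at this
    omega

end Maps

theorem theta_bijection_general (m n : ℕ) (hm : 2 ≤ m) :
    Set.BijOn (theta m) {A : Arcs | RegLinear m (n + m - 1) A} {A : Arcs | MRed m n A} :=
  Set.InvOn.bijOn
    ⟨fun A hA => thetaInv_theta (RegLinear.le_snd hA),
      fun B hB => theta_thetaInv (MRed.snd_pos hB)⟩
    (fun A hA => RegLinear.mRed_theta hm hA)
    (fun B hB => MRed.regLinear_thetaInv (by omega) hB)

/-- `θ_m` is a bijection from the `m`-regular linear stacks on `[n+m−1]` onto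
the `m`-reduced zigzag stacks on `[n]`. -/
theorem theta_bijection (m n : ℕ) (hm : 2 ≤ m) (hn : 1 ≤ n) :
    Set.BijOn (theta m) {A : Arcs | RegLinear m (n + m - 1) A} {A : Arcs | MRed m n A} :=
  theta_bijection_general m n hm
end Paper
end
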